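/- arXiv:1603.06337 — 2 statements merged into one kernel-verified Lean document; each statement's English description precedes it below -/
import Mathlib

section
/- For every p ≥ 1, ε > 0, and matrices ξ, η ∈ ℝ^{N×n} (with Frobenius norm |·|), the monotonicity inequality ((|ξ|^{2p-2}/(ε+|ξ|^p))ξ − (|η|^{2p-2}/(ε+|η|^p))η) · (ξ−η) ≥ 0 holds, where · denotes the componentwise (Frobenius) inner product. -/
open Real RealInnerProductSpace

private lemma key_mono (p ε : ℝ) (hp : 1 ≤ p) (hε : 0 < ε) {a b : ℝ} (hb : 0 ≤ b)
    (hab : b ≤ a) :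
    (b ^ (2 * p - 2) / (ε + b ^ p)) * b ≤ (a ^ (2 * p - 2) / (ε + a ^ p)) * a := by
  have ha : 0 ≤ a := hb.trans hab
  have hda : 0 < ε + a ^ p := by positivity
  have hdb : 0 < ε + b ^ p := by positivity
  rw [div_mul_eq_mul_div, div_mul_eq_mul_div, div_le_div_iff₀ hdb hda]
  have h1 : b ^ (2 * p - 2) * b ≤ a ^ (2 * p - 2) * a := by
    rcases eq_or_lt_of_le hb with hb0 | hb0
    · rw [← hb0]
      simp only [mul_zero]
      positivity
    · have hapos : 0 < a := lt_of_lt_of_le hb0 hab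
      have e1 : b ^ (2 * p - 2) * b = b ^ (2 * p - 1) := by
        rw [show 2 * p - 1 = (2 * p - 2) + 1 by ring, Real.rpow_add hb0, Real.rpow_one]
      have e2 : a ^ (2 * p - 2) * a = a ^ (2 * p - 1) := by
        rw [show 2 * p - 1 = (2 * p - 2) + 1 by ring, Real.rpow_add hapos, Real.rpow_one]
      rw [e1, e2]
      exact Real.rpow_le_rpow hb hab (by linarith)
  have h2 : b ^ (2 * p - 2) * b * a ^ p ≤ a ^ (2 * p - 2) * a * b ^ p := by
    rcases eq_or_lt_of_le hb with hb0 | hb0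
    · rw [← hb0]
      simp only [mul_zero, zero_mul]
      positivity
    · have hapos : 0 < a := lt_of_lt_of_le hb0 hab
      have e1 : b ^ (2 * p - 2) * b = b ^ p * b ^ (p - 1) := by
        rw [← Real.rpow_add hb0, show p + (p - 1) = (2 * p - 2) + 1 by ring,
          Real.rpow_add hb0, Real.rpow_one]
      have e2 : a ^ (2 * p - 2) * a = a ^ p * a ^ (p - 1) := by
        rw [← Real.rpow_add hapos, show p + (p - 1) = (2 * p - 2) + 1 by ring,
          Real.rpow_add hapos, Real.rpow_one]
      rw [e1, e2]
      have hle : b ^ (p - 1) ≤ a ^ (p - 1) :=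
        Real.rpow_le_rpow hb hab (by linarith)
      have hpa : 0 < a ^ p := Real.rpow_pos_of_pos hapos p
      have hpb : 0 < b ^ p := Real.rpow_pos_of_pos hb0 p
      nlinarith [mul_pos hpa hpb, Real.rpow_nonneg hb (p - 1)]
  nlinarith [mul_le_mul_of_nonneg_left h1 hε.le]

/-- monotonicity of ξ ↦ (|ξ|^{2p-2}/(ε+|ξ|^p))ξ on matrices with the
Frobenius inner product (modeled as `EuclideanSpace ℝ (Fin N × Fin n)`). -/
theorem stmt0 (N n : ℕ) (p ε : ℝ) (hp : 1 ≤ p) (hε : 0 < ε)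
    (ξ η : EuclideanSpace ℝ (Fin N × Fin n)) :
    0 ≤ ⟪(‖ξ‖ ^ (2 * p - 2) / (ε + ‖ξ‖ ^ p)) • ξ
        - (‖η‖ ^ (2 * p - 2) / (ε + ‖η‖ ^ p)) • η, ξ - η⟫ := by
  set a := ‖ξ‖ with ha_def
  set b := ‖η‖ with hb_def
  have ha : 0 ≤ a := norm_nonneg _
  have hb : 0 ≤ b := norm_nonneg _
  set A := a ^ (2 * p - 2) / (ε + a ^ p) with hA_def
  set B := b ^ (2 * p - 2) / (ε + b ^ p) with hB_def
  have hA : 0 ≤ A := by rw [hA_def]; positivity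
  have hB : 0 ≤ B := by rw [hB_def]; positivity
  have expand : ⟪A • ξ - B • η, ξ - η⟫
      = A * (a * a) - A * ⟪ξ, η⟫ - B * ⟪η, ξ⟫ + B * (b * b) := by
    rw [inner_sub_left, inner_sub_right, inner_sub_right,
      real_inner_smul_left, real_inner_smul_left, real_inner_smul_left,
      real_inner_smul_left, real_inner_self_eq_norm_mul_norm,
      real_inner_self_eq_norm_mul_norm]
    ring
  rw [expand]
  have hI : ⟪ξ, η⟫ ≤ a * b := real_inner_le_norm ξ η
  have hI2 : ⟪η, ξ⟫ ≤ b * a := real_inner_le_norm η ξ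
  have hkey : 0 ≤ (A * a - B * b) * (a - b) := by
    rcases le_total b a with h | h
    · have := key_mono p ε hp hε hb h
      rw [← hA_def, ← hB_def] at this
      exact mul_nonneg (by linarith) (by linarith)
    · have := key_mono p ε hp hε ha h
      rw [← hA_def, ← hB_def] at this
      nlinarith [this]
  nlinarith [mul_le_mul_of_nonneg_left hI hA, mul_le_mul_of_nonneg_left hI2 hB]
end

section
/- For every p ≥ 1 and ε > 0, the function φ : ℝ^{N×n} → ℝ defined by φ(ξ) = |ξ|^p/p − (ε/p)·log(ε + |ξ|^p) is convex, where |·| is the Frobenius norm. -/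
/-!
On `[0, ∞)` the profile `g(t) = t^p/p − (ε/p)·log(ε + t^p)` has derivative
`g'(t) = t^(p-1) · t^p/(ε + t^p)`, a product of two nonnegative nondecreasing functions.
Hence `g` is convex and nondecreasing there, and composing it with the convex function `‖·‖`
gives a convex function on any real normed space.
-/

open Real Set

theorem ConvexOn.comp_norm {E : Type*} [SeminormedAddCommGroup E] [NormedSpace ℝ E]
    {g : ℝ → ℝ} (hg : ConvexOn ℝ (Ici 0) g) (hg_mono : MonotoneOn g (Ici 0)) :
    ConvexOn ℝ univ (fun x : E => g ‖x‖) := by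
  refine ⟨convex_univ, fun x _ y _ a b ha hb hab => ?_⟩
  have hnorm : ‖a • x + b • y‖ ≤ a * ‖x‖ + b * ‖y‖ :=
    (convexOn_norm convex_univ).2 (mem_univ x) (mem_univ y) ha hb hab
  calc g ‖a • x + b • y‖ ≤ g (a * ‖x‖ + b * ‖y‖) :=
        hg_mono (norm_nonneg _) (by positivity : 0 ≤ a * ‖x‖ + b * ‖y‖) hnorm
    _ ≤ a • g ‖x‖ + b • g ‖y‖ := hg.2 (norm_nonneg x) (norm_nonneg y) ha hb hab

noncomputable def logRegularizedPower (p ε t : ℝ) : ℝ :=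
  t ^ p / p - (ε / p) * Real.log (ε + t ^ p)

namespace logRegularizedPower

variable {p ε : ℝ}

theorem hasDerivAt (hp : 1 ≤ p) (hε : 0 < ε) {t : ℝ} (ht : 0 ≤ t) :
    HasDerivAt (logRegularizedPower p ε) (t ^ (p - 1) * (t ^ p / (ε + t ^ p))) t := by
  have hp0 : p ≠ 0 := by positivity
  have hpos : 0 < ε + t ^ p := by positivity
  have hpow : HasDerivAt (fun t : ℝ => t ^ p) (p * t ^ (p - 1)) t :=
    hasDerivAt_rpow_const (Or.inr hp)
  have hlog : HasDerivAt (fun t : ℝ => Real.log (ε + t ^ p))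
      (p * t ^ (p - 1) / (ε + t ^ p)) t :=
    (hpow.const_add ε).log hpos.ne'
  refine ((hpow.div_const p).sub (hlog.const_mul (ε / p))).congr_deriv ?_
  field_simp
  ring

theorem monotoneOn_deriv (hp : 1 ≤ p) (hε : 0 < ε) :
    MonotoneOn (fun t : ℝ => t ^ (p - 1) * (t ^ p / (ε + t ^ p))) (Ici 0) := by
  have hfirst : MonotoneOn (fun t : ℝ => t ^ (p - 1)) (Ici 0) := fun a ha b _ hab =>
    rpow_le_rpow ha hab (by linarith)
  have hsecond : MonotoneOn (fun t : ℝ => t ^ p / (ε + t ^ p)) (Ici 0) := by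
    intro a ha b _ hab
    have hab_p : a ^ p ≤ b ^ p := rpow_le_rpow ha hab (by linarith)
    have ha_p : 0 ≤ a ^ p := rpow_nonneg ha p
    rw [div_le_div_iff₀ (by linarith) (by linarith)]
    nlinarith
  exact hfirst.mul hsecond (fun t ht => rpow_nonneg ht _)
    (fun t ht => div_nonneg (rpow_nonneg ht p) (by have := rpow_nonneg ht p; linarith))

theorem continuousOn (hp : 1 ≤ p) (hε : 0 < ε) : ContinuousOn (logRegularizedPower p ε) (Ici 0) :=
  fun _ ht => (hasDerivAt hp hε ht).continuousAt.continuousWithinAt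

theorem convexOn (hp : 1 ≤ p) (hε : 0 < ε) : ConvexOn ℝ (Ici 0) (logRegularizedPower p ε) := by
  have hderiv : EqOn (fun t : ℝ => t ^ (p - 1) * (t ^ p / (ε + t ^ p)))
      (deriv (logRegularizedPower p ε)) (Ioi 0) :=
    fun _ ht => (hasDerivAt hp hε (le_of_lt ht)).deriv.symm
  refine MonotoneOn.convexOn_of_deriv (convex_Ici 0) (continuousOn hp hε) ?_ ?_
  · rw [interior_Ici]
    exact fun _ ht => (hasDerivAt hp hε (le_of_lt ht)).differentiableAt.differentiableWithinAt
  · rw [interior_Ici]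
    exact ((monotoneOn_deriv hp hε).mono Ioi_subset_Ici_self).congr hderiv

theorem monotoneOn (hp : 1 ≤ p) (hε : 0 < ε) : MonotoneOn (logRegularizedPower p ε) (Ici 0) := by
  refine monotoneOn_of_hasDerivWithinAt_nonneg (f' := fun t => t ^ (p - 1) * (t ^ p / (ε + t ^ p)))
    (convex_Ici 0) (continuousOn hp hε) ?_ ?_
  · rw [interior_Ici]
    exact fun _ ht => (hasDerivAt hp hε (le_of_lt ht)).hasDerivWithinAt
  · rw [interior_Ici]
    intro t ht
    have ht' : 0 ≤ t := le_of_lt ht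
    exact mul_nonneg (rpow_nonneg ht' _) (div_nonneg (rpow_nonneg ht' p) (by positivity))

end logRegularizedPower

/-- convexity of ξ ↦ |ξ|^p/p − (ε/p)·log(ε + |ξ|^p) on matrices with the
Frobenius norm (modeled as `EuclideanSpace ℝ (Fin N × Fin n)`). -/
theorem stmt1 (N n : ℕ) (p ε : ℝ) (hp : 1 ≤ p) (hε : 0 < ε) :
    ConvexOn ℝ Set.univ
      (fun ξ : EuclideanSpace ℝ (Fin N × Fin n) =>
        ‖ξ‖ ^ p / p - (ε / p) * Real.log (ε + ‖ξ‖ ^ p)) :=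
  (logRegularizedPower.convexOn hp hε).comp_norm (logRegularizedPower.monotoneOn hp hε)
end
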